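/- arXiv:1903.00505 — 7 statements merged into one kernel-verified Lean document; each statement's English description precedes it below -/
import Mathlib

section
/- If a connected graph G has a dominating set of size at most k, then the diameter of G is at most 3k - 1 (in particular, bounded by 3k). -/
open SimpleGraph

private lemma aux_length_drop {V : Type*} {G : SimpleGraph V} {u v : V}
    (p : G.Walk u v) (n : ℕ) : (p.drop n).length = p.length - n := by
  induction p generalizing n with
  | nil => simp [SimpleGraph.Walk.drop]
  | cons h q ih =>
    cases n with
    | zero => simp [SimpleGraph.Walk.drop]
    | succ n => simp [SimpleGraph.Walk.drop, ih]

private lemma aux_dist_getVert_le {V : Type*} {G : SimpleGraph V}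
    (hG : G.Connected) {u v : V} (p : G.Walk u v) (i : ℕ) :
    G.dist u (p.getVert i) ≤ i := by
  induction p generalizing i with
  | nil => simp [SimpleGraph.Walk.getVert, SimpleGraph.dist_self]
  | @cons a b c h q ih =>
    cases i with
    | zero => simp
    | succ n =>
      rw [SimpleGraph.Walk.getVert_cons_succ]
      calc G.dist a (q.getVert n) ≤ G.dist a b + G.dist b (q.getVert n) :=
            hG.dist_triangle
        _ ≤ 1 + n := by
            gcongr
            · exact le_of_eq (SimpleGraph.dist_eq_one_iff_adj.mpr h)
            · exact ih n
        _ = n + 1 := by omega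

/-- If a connected finite graph `G` has a dominating set of size at most `k`,
then its diameter is at most `3k - 1` (in particular, at most `3k`). -/
theorem dominating_set_diam_bound {V : Type*} [Fintype V] (G : SimpleGraph V)
    (hG : G.Connected) (k : ℕ) (D : Finset V)
    (hdom : ∀ v : V, ∃ d ∈ D, d = v ∨ G.Adj d v)
    (hcard : D.card ≤ k) :
    G.diam ≤ 3 * k - 1 := by
  cases isEmpty_or_nonempty V with
  | inl h => exact le_trans (le_of_eq (SimpleGraph.diam_eq_zero.mpr (Or.inr inferInstance))) (Nat.zero_le _)
  | inr h =>
  -- k ≥ 1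
  obtain ⟨v0⟩ := h
  haveI : Nonempty V := ⟨v0⟩
  obtain ⟨d0, hd0D, _⟩ := hdom v0
  have hk1 : 1 ≤ k := le_trans (Finset.card_pos.mpr ⟨d0, hd0D⟩) hcard
  -- suffices to bound every distance
  suffices hd : ∀ u v : V, G.dist u v ≤ 3 * k - 1 by
    obtain ⟨u, v, huv⟩ := G.exists_dist_eq_diam (α := V)
    rw [← huv]; exact hd u v
  intro u v
  by_contra hcon
  push_neg at hcon
  have hdge : 3 * k ≤ G.dist u v := by omega
  obtain ⟨p, hp⟩ := (hG u v).exists_walk_length_eq_dist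
  -- dominators for getVert (3*i), i : Fin (k+1)
  have hdomf : ∀ i : Fin (k + 1), ∃ d ∈ D, d = p.getVert (3 * i) ∨ G.Adj d (p.getVert (3 * i)) :=
    fun i => hdom _
  choose f hfD hf using hdomf
  have hdist1 : ∀ i : Fin (k + 1), G.dist (p.getVert (3 * i)) (f i) ≤ 1 := by
    intro i
    rcases hf i with h | h
    · rw [h]; simp [SimpleGraph.dist_self]
    · rw [SimpleGraph.dist_comm]; exact le_of_eq (SimpleGraph.dist_eq_one_iff_adj.mpr h)
  -- distance between segment points is large
  have hfar : ∀ i j : Fin (k + 1), i < j →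
      3 ≤ G.dist (p.getVert (3 * i)) (p.getVert (3 * j)) := by
    intro i j hij
    have h1 : G.dist u (p.getVert (3 * i)) ≤ 3 * i := aux_dist_getVert_le hG p _
    have h2 : G.dist (p.getVert (3 * j)) v ≤ p.length - 3 * j := by
      have := SimpleGraph.dist_le (p.drop (3 * j))
      rwa [aux_length_drop] at this
    have h3 : G.dist u v ≤ G.dist u (p.getVert (3 * i)) +
        G.dist (p.getVert (3 * i)) (p.getVert (3 * j)) + G.dist (p.getVert (3 * j)) v := by
      calc G.dist u v ≤ G.dist u (p.getVert (3 * j)) + G.dist (p.getVert (3 * j)) v :=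
            hG.dist_triangle
        _ ≤ (G.dist u (p.getVert (3 * i)) + G.dist (p.getVert (3 * i)) (p.getVert (3 * j)))
            + G.dist (p.getVert (3 * j)) v := by
            gcongr; exact hG.dist_triangle
    have hjk : 3 * (j : ℕ) ≤ p.length := by
      have hj : (j : ℕ) ≤ k := Nat.lt_succ_iff.mp j.isLt
      omega
    have hij' : (i : ℕ) + 1 ≤ (j : ℕ) := hij
    omega
  -- f is injective
  have hinj : Function.Injective f := by
    intro i j hij
    by_contra hne
    rcases Ne.lt_or_gt hne with hlt | hlt
    all_goals {
      first
        | have hfar' := hfar i j hlt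
        | have hfar' := hfar j i hlt
      have hle2 : G.dist (p.getVert (3 * i)) (p.getVert (3 * j)) ≤ 2 := by
        calc G.dist (p.getVert (3 * i)) (p.getVert (3 * j))
            ≤ G.dist (p.getVert (3 * i)) (f i) + G.dist (f i) (p.getVert (3 * j)) :=
              hG.dist_triangle
          _ ≤ 1 + 1 := by
              gcongr
              · exact hdist1 i
              · rw [hij, SimpleGraph.dist_comm]; exact hdist1 j
          _ = 2 := rfl
      have hcomm : G.dist (p.getVert (3 * (i : ℕ))) (p.getVert (3 * (j : ℕ)))
          = G.dist (p.getVert (3 * (j : ℕ))) (p.getVert (3 * (i : ℕ))) :=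
        SimpleGraph.dist_comm
      omega
    }
  have hcard' : k + 1 ≤ D.card := by
    have := Finset.card_le_card_of_injOn (s := Finset.univ) f (fun i _ => hfD i)
      (Function.Injective.injOn hinj)
    simpa using this
  omega
end

section
/- If λ is a (p+1)-centered coloring of a graph G, then for every i ≤ p, every subgraph of G restricted to vertices receiving colors from a set I of at most i colors has treedepth at most i. In particular, every (p+1)-centered coloring is a p-treedepth coloring. -/
/-- Treedepth at most `d`, via an elimination-forest ancestor order. -/
def TreedepthLE {V : Type*} (G : SimpleGraph V) (d : ℕ) : Prop :=
  ∃ lt : V → V → Prop,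
    (∀ a b c, lt a b → lt b c → lt a c) ∧
    (∀ a, ¬ lt a a) ∧
    (∀ a b c, lt a c → lt b c → a = b ∨ lt a b ∨ lt b a) ∧
    (∀ ⦃a b⦄, G.Adj a b → lt a b ∨ lt b a) ∧
    (∀ C : Finset V, (∀ a ∈ C, ∀ b ∈ C, a = b ∨ lt a b ∨ lt b a) → C.card ≤ d)

/-- A coloring `col` of `G` is `q`-centered if every connected induced subgraph
either has a color appearing exactly once, or receives at least `q` colors. -/
def IsCenteredColoring {V C : Type*} [DecidableEq V] [DecidableEq C]
    (G : SimpleGraph V) (col : V → C) (q : ℕ) : Prop :=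
  ∀ S : Finset V, (G.induce (↑S : Set V)).Connected →
    (∃ c, (S.filter (fun v => col v = c)).card = 1) ∨ q ≤ (S.image col).card


open SimpleGraph

section Aux
variable {V : Type*} (G : SimpleGraph V)

lemma aux_comp_conn (K : G.ConnectedComponent) : (G.induce K.supp).Connected := by
  classical
  induction K using SimpleGraph.ConnectedComponent.ind with
  | _ u =>
    apply G.induce_connected_of_patches u (by simp [ConnectedComponent.mem_supp_iff])
    intro v hv
    rw [ConnectedComponent.mem_supp_iff, ConnectedComponent.eq] at hv
    obtain ⟨p⟩ := hv.symm
    refine ⟨{x | x ∈ p.support}, ?_, p.start_mem_support, p.end_mem_support, ?_⟩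
    · intro x hx
      rw [ConnectedComponent.mem_supp_iff, ConnectedComponent.eq]
      exact ⟨(p.takeUntil x hx).reverse⟩
    · exact (p.connected_induce_support).preconnected _ _

noncomputable def aux_iso (W : Set V) (s : Set W) :
    (G.induce W).induce s ≃g G.induce (Subtype.val '' s) where
  toEquiv := Equiv.Set.image Subtype.val s Subtype.val_injective
  map_rel_iff' := by
    rintro ⟨⟨a, ha⟩, has⟩ ⟨⟨b, hb⟩, hbs⟩
    simp [Equiv.Set.image, Equiv.Set.imageOfInjOn, comap_adj]

lemma aux_conn_image (W : Set V) (s : Set W) (h : ((G.induce W).induce s).Connected) :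
    (G.induce (Subtype.val '' s)).Connected :=
  ((aux_iso G W s).connected_iff).mp h

end Aux

/-- If `col` is a `(p+1)`-centered coloring of `G`, then for every `i ≤ p` and
every set `I` of at most `i` colors, the subgraph induced on the vertices
colored from `I` has treedepth at most `i`; in particular every
`(p+1)`-centered coloring is a `p`-treedepth coloring. -/
theorem centered_coloring_is_treedepth_coloring {V C : Type*} [Fintype V]
    [DecidableEq V] [DecidableEq C]
    (G : SimpleGraph V) (col : V → C) (p : ℕ)
    (hcc : IsCenteredColoring G col (p + 1)) :
    ∀ i ≤ p, ∀ I : Finset C, I.card ≤ i →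
      TreedepthLE (G.induce {v : V | col v ∈ I}) i := by
  classical
  intro i
  induction i with
  | zero =>
    intro _ I hI
    have hIe : I = ∅ := Finset.card_eq_zero.mp (Nat.le_zero.mp hI)
    subst hIe
    refine ⟨fun _ _ => False, by tauto, by tauto, by tauto, ?_, ?_⟩
    · rintro ⟨a, ha⟩ ⟨b, hb⟩ hab
      exact absurd ha (by simp)
    · intro Cs _
      have : Cs = ∅ := by
        rw [Finset.eq_empty_iff_forall_notMem]
        rintro ⟨a, ha⟩ _
        exact absurd ha (by simp)
      simp [this]
  | succ n ih =>
    intro hnp I hI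
    set W : Set V := {v : V | col v ∈ I} with hW
    set H : SimpleGraph W := G.induce W with hH
    have key : ∀ K : H.ConnectedComponent, ∃ r : W,
        H.connectedComponentMk r = K ∧
        ∀ x : W, H.connectedComponentMk x = K → col x.1 = col r.1 → x = r := by
      intro K
      set S : Finset V := (Set.toFinite (Subtype.val '' K.supp)).toFinset with hS
      have hcoe : (↑S : Set V) = Subtype.val '' K.supp := Set.Finite.coe_toFinset _
      have conn : (G.induce (↑S : Set V)).Connected := by
        rw [hcoe]; exact aux_conn_image G W K.supp (aux_comp_conn H K)
      rcases hcc S conn with ⟨c, hc⟩ | hbig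
      · rw [Finset.card_eq_one] at hc
        obtain ⟨v0, hv0⟩ := hc
        have hv0S : v0 ∈ S ∧ col v0 = c := by
          have := hv0 ▸ Finset.mem_singleton_self v0
          simpa using Finset.mem_filter.mp this
        have : v0 ∈ Subtype.val '' K.supp := by rw [← hcoe]; exact_mod_cast hv0S.1
        obtain ⟨w0, hw0, hval⟩ := this
        refine ⟨w0, (ConnectedComponent.mem_supp_iff _ _).mp hw0, ?_⟩
        intro x hx hcolx
        have hxS : x.1 ∈ S := by
          rw [← Finset.mem_coe, hcoe]
          exact ⟨x, (ConnectedComponent.mem_supp_iff _ _).mpr hx, rfl⟩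
        have : x.1 ∈ S.filter (fun v => col v = c) :=
          Finset.mem_filter.mpr ⟨hxS, by rw [hcolx, hval, hv0S.2]⟩
        rw [hv0] at this
        exact Subtype.ext (by rw [Finset.mem_singleton.mp this, hval])
      · exfalso
        have hsub : S.image col ⊆ I := by
          intro c hc
          obtain ⟨v, hv, rfl⟩ := Finset.mem_image.mp hc
          have : v ∈ Subtype.val '' K.supp := by rw [← hcoe]; exact_mod_cast hv
          obtain ⟨w, _, rfl⟩ := this
          exact w.2
        have := (Finset.card_le_card hsub).trans hI
        omega
    choose r hrK hruniq using key
    have ihK := fun K : H.ConnectedComponent =>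
      ih (by omega) (I.erase (col (r K).1)) (by
        have : col (r K).1 ∈ I := (r K).2
        rw [Finset.card_erase_of_mem this]; omega)
    choose lt' h1 h2 h3 h4 h5 using ihK
    set cm : W → H.ConnectedComponent := fun a => H.connectedComponentMk a with hcm
    have hmem : ∀ a : W, a ≠ r (cm a) → col a.1 ∈ I.erase (col (r (cm a)).1) := by
      intro a ha
      refine Finset.mem_erase.mpr ⟨?_, a.2⟩
      intro hcol
      exact ha (hruniq (cm a) a rfl hcol)
    -- proof-irrelevant transfer between equal components
    have tr : ∀ {K K' : H.ConnectedComponent}, K = K' → ∀ {x y : W}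
        {hx : col x.1 ∈ I.erase (col (r K).1)} {hy : col y.1 ∈ I.erase (col (r K).1)}
        {hx' : col x.1 ∈ I.erase (col (r K').1)} {hy' : col y.1 ∈ I.erase (col (r K').1)},
        lt' K ⟨x.1, hx⟩ ⟨y.1, hy⟩ → lt' K' ⟨x.1, hx'⟩ ⟨y.1, hy'⟩ := by
      rintro K _ rfl x y hx hy hx' hy' h
      exact h
    refine ⟨fun a b => cm a = cm b ∧ b ≠ r (cm a) ∧
      (a = r (cm a) ∨ ∃ (ha : col a.1 ∈ I.erase (col (r (cm a)).1))
        (hb : col b.1 ∈ I.erase (col (r (cm a)).1)),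
        lt' (cm a) ⟨a.1, ha⟩ ⟨b.1, hb⟩), ?_, ?_, ?_, ?_, ?_⟩
    · -- transitivity
      rintro a b c ⟨hab, hbr, hab'⟩ ⟨hbc, hcr, hbc'⟩
      refine ⟨hab.trans hbc, by rwa [hab], ?_⟩
      rcases hab' with h | ⟨ha, hb, hlt⟩
      · exact Or.inl h
      · rcases hbc' with h | ⟨hb2, hc, hlt2⟩
        · exact absurd (hab ▸ h) hbr
        · have hc' : col c.1 ∈ I.erase (col (r (cm a)).1) := by rw [hab]; exact hc
          exact Or.inr ⟨ha, hc', h1 (cm a) _ _ _ hlt (tr hab.symm hlt2)⟩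
    · -- irreflexivity
      rintro a ⟨_, har, h | ⟨ha, hb, hlt⟩⟩
      · exact har h
      · exact h2 (cm a) _ hlt
    · -- ancestors comparable
      rintro a b c ⟨hac, hcr, hac'⟩ ⟨hbc, hcr2, hbc'⟩
      have hab : cm a = cm b := hac.trans hbc.symm
      by_cases haroot : a = r (cm a)
      · by_cases hbroot : b = r (cm b)
        · exact Or.inl (by rw [haroot, hbroot, hab])
        · refine Or.inr (Or.inl ⟨hab, ?_, Or.inl haroot⟩)
          intro h; exact hbroot (by rw [← hab]; exact h)
      · by_cases hbroot : b = r (cm b)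
        · refine Or.inr (Or.inr ⟨hab.symm, ?_, Or.inl hbroot⟩)
          intro h; exact haroot (by rw [hab]; exact h)
        · rcases hac' with h | ⟨ha, hc, hltac⟩
          · exact absurd h haroot
          rcases hbc' with h | ⟨hb, hc2, hltbc⟩
          · exact absurd h hbroot
          have hb' : col b.1 ∈ I.erase (col (r (cm a)).1) := by rw [hab]; exact hb
          have hltbc' : lt' (cm a) ⟨b.1, hb'⟩ ⟨c.1, hc⟩ := tr hab.symm hltbc
          rcases h3 (cm a) _ _ _ hltac hltbc' with heq | hlt | hlt
          · have hval := Subtype.ext_iff.mp heq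
            exact Or.inl (Subtype.ext hval)
          · refine Or.inr (Or.inl ⟨hab, ?_, Or.inr ⟨ha, hb', hlt⟩⟩)
            intro h; exact hbroot (by rw [← hab]; exact h)
          · refine Or.inr (Or.inr ⟨hab.symm, ?_, Or.inr ⟨hb, by rw [← hab]; exact ha,
              tr hab hlt⟩⟩)
            intro h; exact haroot (by rw [hab]; exact h)
    · -- adjacency
      intro a b hadj
      have hGadj : G.Adj a.1 b.1 := hadj
      have hHadj : H.Adj a b := hadj
      have hab : cm a = cm b := ConnectedComponent.connectedComponentMk_eq_of_adj hHadj
      have hne : a ≠ b := fun h => G.irrefl (h ▸ hGadj)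
      by_cases haroot : a = r (cm a)
      · refine Or.inl ⟨hab, ?_, Or.inl haroot⟩
        intro hb
        exact hne (haroot.trans hb.symm)
      · by_cases hbroot : b = r (cm b)
        · refine Or.inr ⟨hab.symm, ?_, Or.inl hbroot⟩
          intro ha
          exact hne (ha.trans hbroot.symm)
        · have ha := hmem a haroot
          have hbm := hmem b hbroot
          have hb : col b.1 ∈ I.erase (col (r (cm a)).1) := by rw [hab]; exact hbm
          have : (G.induce {v : V | col v ∈ I.erase (col (r (cm a)).1)}).Adj ⟨a.1, ha⟩ ⟨b.1, hb⟩ :=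
            hGadj
          rcases h4 (cm a) this with hlt | hlt
          · refine Or.inl ⟨hab, ?_, Or.inr ⟨ha, hb, hlt⟩⟩
            intro h; exact hbroot (by rw [← hab]; exact h)
          · refine Or.inr ⟨hab.symm, ?_, Or.inr ⟨hbm, by rw [← hab]; exact ha, tr hab hlt⟩⟩
            intro h; exact haroot (by rw [hab]; exact h)
    · -- chain bound
      intro Cs hchain
      rcases Finset.eq_empty_or_nonempty Cs with rfl | ⟨a0, ha0⟩
      · simp
      set K := cm a0 with hK
      have hsame : ∀ a ∈ Cs, cm a = K := by
        intro a ha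
        rcases hchain a ha a0 ha0 with rfl | ⟨h, _⟩ | ⟨h, _⟩
        · rfl
        · exact h
        · exact h.symm
      set D := Cs.filter (fun a => a ≠ r K) with hD
      have hroots : (Cs.filter (fun a => ¬ a ≠ r K)).card ≤ 1 := by
        apply Finset.card_le_one.mpr
        intro a ha b hb
        simp only [Finset.mem_filter, not_not] at ha hb
        rw [ha.2, hb.2]
      have hsplit : D.card + (Cs.filter (fun a => ¬ a ≠ r K)).card = Cs.card :=
        Finset.card_filter_add_card_filter_not _
      have hmemD : ∀ a ∈ D, col a.1 ∈ I.erase (col (r K).1) := by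
        intro a ha
        rw [Finset.mem_filter] at ha
        have h2 := hmem a (by rw [hsame a ha.1]; exact ha.2)
        rwa [hsame a ha.1] at h2
      set D' : Finset ↥{v : V | col v ∈ I.erase (col (r K).1)} :=
        D.attach.image (fun a => ⟨a.1.1, hmemD a.1 a.2⟩) with hD'
      have hcardD : D.card ≤ D'.card := by
        rw [hD', Finset.card_image_of_injOn, Finset.card_attach]
        intro x _ y _ hxy
        have hv := Subtype.ext_iff.mp hxy
        exact Subtype.ext (Subtype.ext hv)
      have hchainD' : ∀ a ∈ D', ∀ b ∈ D', a = b ∨ lt' K a b ∨ lt' K b a := by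
        intro a ha b hb
        obtain ⟨⟨x, hx⟩, _, rfl⟩ := Finset.mem_image.mp ha
        obtain ⟨⟨y, hy⟩, _, rfl⟩ := Finset.mem_image.mp hb
        have hxC : x ∈ Cs := (Finset.mem_filter.mp hx).1
        have hyC : y ∈ Cs := (Finset.mem_filter.mp hy).1
        have hxK : cm x = K := hsame x hxC
        have hyK : cm y = K := hsame y hyC
        rcases hchain x hxC y hyC with rfl | ⟨_, _, h | ⟨hx', hy', hlt⟩⟩ | ⟨_, _, h | ⟨hy', hx', hlt⟩⟩
        · exact Or.inl rfl
        · exact absurd (hxK ▸ h) (Finset.mem_filter.mp hx).2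
        · exact Or.inr (Or.inl (tr hxK hlt))
        · exact absurd (hyK ▸ h) (Finset.mem_filter.mp hy).2
        · exact Or.inr (Or.inr (tr hyK hlt))
      have := h5 K D' hchainD'
      omega
end

section
/- Let λ be a (p+1)-centered coloring of a graph G and let H be a subgraph of G of treedepth i ≤ p. Then the vertices of H receive at least i distinct colors under λ. -/
theorem Finset.card_image_erase_add_one_of_filter_eq_singleton {α β : Type*} [DecidableEq α]
    [DecidableEq β] {f : α → β} {s : Finset α} {u : α} {c : β}
    (hu : s.filter (fun w => f w = c) = {u}) :
    ((s.erase u).image f).card + 1 = (s.image f).card := by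
  have hus : u ∈ s.filter (fun w => f w = c) := hu ▸ mem_singleton_self u
  have hc : f u ∉ (s.erase u).image f := by
    intro hmem
    obtain ⟨w, hw, hwu⟩ := mem_image.mp hmem
    have : w ∈ s.filter (fun w => f w = c) :=
      mem_filter.mpr ⟨mem_of_mem_erase hw, hwu.trans (mem_filter.mp hus).2⟩
    exact ne_of_mem_erase hw (by simpa [hu] using this)
  conv_rhs => rw [← insert_erase (mem_filter.mp hus).1, image_insert]
  rw [card_insert_of_notMem hc]

namespace SimpleGraph

open Finset

variable {V : Type*}

/-- `lt` is the strict ancestor relation of an elimination forest of `H[A]` of depth at most `d`;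
only its comparabilities and chains inside `A` are constrained. -/
structure IsEliminationOrder (H : SimpleGraph V) (A : Finset V) (d : ℕ) (lt : V → V → Prop) :
    Prop where
  trans : ∀ a b c, lt a b → lt b c → lt a c
  irrefl : ∀ a, ¬ lt a a
  comparable_of_lt_of_lt : ∀ a b c, lt a c → lt b c → a = b ∨ lt a b ∨ lt b a
  comparable_of_adj : ∀ a ∈ A, ∀ b ∈ A, H.Adj a b → lt a b ∨ lt b a
  card_le_of_chain :
    ∀ C ⊆ A, (∀ a ∈ C, ∀ b ∈ C, a = b ∨ lt a b ∨ lt b a) → C.card ≤ d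

def TreedepthOnLE (H : SimpleGraph V) (A : Finset V) (d : ℕ) : Prop :=
  ∃ lt, H.IsEliminationOrder A d lt

theorem treedepthLE_of_treedepthOnLE_map {W : Type*} {H : SimpleGraph W} {f : W ↪ V}
    {A : Finset V} {d : ℕ} (hA : ∀ w, f w ∈ A) (h : (H.map f).TreedepthOnLE A d) :
    TreedepthLE H d := by
  obtain ⟨lt, hlt⟩ := h
  refine ⟨fun a b => lt (f a) (f b), fun a b c => hlt.trans _ _ _, fun a => hlt.irrefl _,
    fun a b c pac pbc => ?_, fun a b hab => ?_, fun C hchain => ?_⟩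
  · rcases hlt.comparable_of_lt_of_lt _ _ _ pac pbc with h | p | p
    exacts [.inl (f.injective h), .inr (.inl p), .inr (.inr p)]
  · exact hlt.comparable_of_adj _ (hA a) _ (hA b) (map_adj_apply.mpr hab)
  · rw [← card_map f]
    refine hlt.card_le_of_chain _ (fun _ hx => ?_) fun x hx y hy => ?_
    · obtain ⟨w, -, rfl⟩ := mem_map.mp hx
      exact hA w
    · obtain ⟨a, ha, rfl⟩ := mem_map.mp hx
      obtain ⟨b, hb, rfl⟩ := mem_map.mp hy
      rcases hchain a ha b hb with rfl | p | p
      exacts [.inl rfl, .inr (.inl p), .inr (.inr p)]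

def ReachIn (H : SimpleGraph V) (A : Finset V) : V → V → Prop :=
  Relation.ReflTransGen fun a b => a ∈ A ∧ b ∈ A ∧ H.Adj a b

open Classical in
noncomputable def componentIn (H : SimpleGraph V) (A : Finset V) (v : V) : Finset V :=
  A.filter (H.ReachIn A v)

section Components

variable {H : SimpleGraph V} {A : Finset V} {v : V}

theorem mem_componentIn {t : V} : t ∈ H.componentIn A v ↔ t ∈ A ∧ H.ReachIn A v t := by
  classical
  simp [componentIn]

theorem componentIn_subset : H.componentIn A v ⊆ A :=
  fun _ ht => (mem_componentIn.mp ht).1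

theorem self_mem_componentIn (hv : v ∈ A) : v ∈ H.componentIn A v :=
  mem_componentIn.mpr ⟨hv, .refl⟩

theorem componentIn_eq_of_adj {a b : V} (ha : a ∈ A) (hb : b ∈ A) (hab : H.Adj a b) :
    H.componentIn A a = H.componentIn A b := by
  ext t
  simp only [mem_componentIn]
  exact ⟨fun ⟨ht, hr⟩ => ⟨ht, .head ⟨hb, ha, hab.symm⟩ hr⟩,
    fun ⟨ht, hr⟩ => ⟨ht, .head ⟨ha, hb, hab⟩ hr⟩⟩

theorem connected_induce_componentIn (hv : v ∈ A) :
    (H.induce (H.componentIn A v : Set V)).Connected := by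
  have hreach : ∀ t, H.ReachIn A v t → ∀ ht : t ∈ H.componentIn A v,
      (H.induce (H.componentIn A v : Set V)).Reachable ⟨v, self_mem_componentIn hv⟩ ⟨t, ht⟩ := by
    intro t hvt
    induction hvt with
    | refl => exact fun _ => .rfl
    | @tail b c hvb hbc ih =>
      intro hc
      have hb : b ∈ H.componentIn A v := mem_componentIn.mpr ⟨hbc.1, hvb⟩
      exact (ih hb).trans (Adj.reachable (G := H.induce _) hbc.2.2)
  exact (connected_iff_exists_forall_reachable _).mpr
    ⟨_, fun ⟨t, ht⟩ => hreach t (mem_componentIn.mp ht).2 ht⟩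

/-- The forests of the components are glued by declaring vertices of different components
incomparable. -/
theorem treedepthOnLE_of_forall_componentIn {d : ℕ}
    (h : ∀ v ∈ A, H.TreedepthOnLE (H.componentIn A v) d) : H.TreedepthOnLE A d := by
  choose! ord hord using fun T (hT : H.TreedepthOnLE T d) => hT
  have hord' (v : V) (hv : v ∈ A) :
      H.IsEliminationOrder (H.componentIn A v) d (ord (H.componentIn A v)) :=
    hord _ (h v hv)
  refine ⟨fun a b => a ∈ A ∧ H.componentIn A a = H.componentIn A b ∧
    ord (H.componentIn A a) a b, ⟨?_, ?_, ?_, ?_, ?_⟩⟩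
  · rintro a b c ⟨ha, hab, pab⟩ ⟨-, hbc, pbc⟩
    rw [← hab] at pbc
    exact ⟨ha, hab.trans hbc, (hord' a ha).trans a b c pab pbc⟩
  · rintro a ⟨ha, -, paa⟩
    exact (hord' a ha).irrefl a paa
  · rintro a b c ⟨ha, hac, pac⟩ ⟨hb, hbc, pbc⟩
    have hab := hac.trans hbc.symm
    rw [← hab] at pbc
    rcases (hord' a ha).comparable_of_lt_of_lt a b c pac pbc with rfl | p | p
    · exact .inl rfl
    · exact .inr (.inl ⟨ha, hab, p⟩)
    · exact .inr (.inr ⟨hb, hab.symm, hab ▸ p⟩)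
  · intro a ha b hb hadj
    have hab := componentIn_eq_of_adj ha hb hadj
    have hbT : b ∈ H.componentIn A a := hab ▸ self_mem_componentIn hb
    rcases (hord' a ha).comparable_of_adj a (self_mem_componentIn ha) b hbT hadj with p | p
    · exact .inl ⟨ha, hab, p⟩
    · exact .inr ⟨hb, hab.symm, hab ▸ p⟩
  · intro C hCA hchain
    rcases C.eq_empty_or_nonempty with rfl | ⟨x, hx⟩
    · simp
    have hcomp : ∀ a ∈ C, H.componentIn A a = H.componentIn A x := by
      intro a ha
      rcases hchain a ha x hx with rfl | ⟨-, h, -⟩ | ⟨-, h, -⟩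
      exacts [rfl, h, h.symm]
    refine (hord' x (hCA hx)).card_le_of_chain C
      (fun a ha => hcomp a ha ▸ self_mem_componentIn (hCA ha)) fun a ha b hb => ?_
    rcases hchain a ha b hb with rfl | ⟨-, -, p⟩ | ⟨-, -, p⟩
    · exact .inl rfl
    · exact .inr (.inl (hcomp a ha ▸ p))
    · exact .inr (.inr (hcomp b hb ▸ p))

end Components

section Treedepth

variable [DecidableEq V] {H : SimpleGraph V} {A : Finset V} {d : ℕ}

/-- `v` becomes the common root of the forest of `H[A - v]`. -/
theorem treedepthOnLE_succ_of_erase {v : V} (hv : v ∈ A) (h : H.TreedepthOnLE (A.erase v) d) :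
    H.TreedepthOnLE A (d + 1) := by
  obtain ⟨lt, hlt⟩ := h
  refine ⟨fun a b => a ∈ A ∧ b ∈ A.erase v ∧ (a = v ∨ lt a b), ⟨?_, ?_, ?_, ?_, ?_⟩⟩
  · rintro a b c ⟨ha, hb, rfl | pab⟩ ⟨-, hc, rfl | pbc⟩
    · exact ⟨ha, hc, .inl rfl⟩
    · exact ⟨ha, hc, .inl rfl⟩
    · exact absurd rfl (ne_of_mem_erase hb)
    · exact ⟨ha, hc, .inr (hlt.trans a b c pab pbc)⟩
  · rintro a ⟨-, ha, rfl | paa⟩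
    · exact ne_of_mem_erase ha rfl
    · exact hlt.irrefl a paa
  · rintro a b c ⟨ha, hc, pac⟩ ⟨hb, -, pbc⟩
    by_cases hav : a = v
    · by_cases hbv : b = v
      · exact .inl (hav.trans hbv.symm)
      · exact .inr (.inl ⟨ha, mem_erase.mpr ⟨hbv, hb⟩, .inl hav⟩)
    by_cases hbv : b = v
    · exact .inr (.inr ⟨hb, mem_erase.mpr ⟨hav, ha⟩, .inl hbv⟩)
    rcases hlt.comparable_of_lt_of_lt a b c (pac.resolve_left hav) (pbc.resolve_left hbv)
      with rfl | p | p
    · exact .inl rfl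
    · exact .inr (.inl ⟨ha, mem_erase.mpr ⟨hbv, hb⟩, .inr p⟩)
    · exact .inr (.inr ⟨hb, mem_erase.mpr ⟨hav, ha⟩, .inr p⟩)
  · intro a ha b hb hadj
    by_cases hav : a = v
    · exact .inl ⟨ha, mem_erase.mpr ⟨fun hbv => hadj.ne (hav.trans hbv.symm), hb⟩, .inl hav⟩
    by_cases hbv : b = v
    · exact .inr ⟨hb, mem_erase.mpr ⟨hav, ha⟩, .inl hbv⟩
    have ha' := mem_erase.mpr ⟨hav, ha⟩
    have hb' := mem_erase.mpr ⟨hbv, hb⟩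
    rcases hlt.comparable_of_adj a ha' b hb' hadj with p | p
    · exact .inl ⟨ha, hb', .inr p⟩
    · exact .inr ⟨hb, ha', .inr p⟩
  · intro C hCA hchain
    have hchain' : ∀ a ∈ C.erase v, ∀ b ∈ C.erase v, a = b ∨ lt a b ∨ lt b a := by
      intro a ha b hb
      rcases hchain a (mem_of_mem_erase ha) b (mem_of_mem_erase hb) with
        rfl | ⟨-, -, p⟩ | ⟨-, -, p⟩
      · exact .inl rfl
      · exact .inr (.inl (p.resolve_left (ne_of_mem_erase ha)))
      · exact .inr (.inr (p.resolve_left (ne_of_mem_erase hb)))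
    have := hlt.card_le_of_chain _ (erase_subset_erase v hCA) hchain'
    have := C.pred_card_le_card_erase (a := v)
    omega

theorem lt_card_image_of_not_treedepthOnLE {C : Type*} [DecidableEq C] {G : SimpleGraph V}
    {col : V → C} {p : ℕ} (hcc : IsCenteredColoring G col (p + 1)) (hHG : H ≤ G) {i : ℕ}
    (hip : i ≤ p) (hA : ¬ H.TreedepthOnLE A i) : i < (A.image col).card := by
  induction i using Nat.strong_induction_on generalizing A with
  | _ i ih =>
  obtain ⟨v, hv, hT⟩ : ∃ v ∈ A, ¬ H.TreedepthOnLE (H.componentIn A v) i := by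
    by_contra! h
    exact hA (treedepthOnLE_of_forall_componentIn h)
  set T := H.componentIn A v
  refine lt_of_lt_of_le ?_ (card_le_card (image_subset_image (componentIn_subset : T ⊆ A)))
  rcases hcc T ((connected_induce_componentIn hv).mono (comap_monotone _ hHG)) with
    ⟨c, hc⟩ | hmany
  · obtain ⟨u, hu⟩ := card_eq_one.mp hc
    have huT : u ∈ T := (mem_filter.mp (hu ▸ mem_singleton_self u)).1
    have hrest : i ≤ ((T.erase u).image col).card := by
      rcases i with _ | k
      · exact Nat.zero_le _
      · exact ih k k.lt_succ_self (by omega) fun h => hT (treedepthOnLE_succ_of_erase huT h)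
    rw [← card_image_erase_add_one_of_filter_eq_singleton hu]
    omega
  · exact (Nat.lt_succ_of_le hip).trans_le hmany

end Treedepth

end SimpleGraph

theorem treedepth_subgraph_many_colors_general {V C : Type*}
    [DecidableEq V] [DecidableEq C]
    (G : SimpleGraph V) (col : V → C) (p : ℕ)
    (hcc : IsCenteredColoring G col (p + 1))
    (S : Finset V) (H : SimpleGraph {v : V // v ∈ S})
    (hsub : ∀ a b : {v : V // v ∈ S}, H.Adj a b → G.Adj a b)
    (i : ℕ) (hip : i ≤ p)
    (htd' : ¬ TreedepthLE H (i - 1)) :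
    i ≤ (S.image col).card := by
  have hHG : H.map (Function.Embedding.subtype (· ∈ S)) ≤ G :=
    (SimpleGraph.map_le_iff_le_comap _ _ _).mpr hsub
  have hS : ¬ (H.map (Function.Embedding.subtype (· ∈ S))).TreedepthOnLE S (i - 1) :=
    fun h => htd' (SimpleGraph.treedepthLE_of_treedepthOnLE_map (fun w => w.2) h)
  have := SimpleGraph.lt_card_image_of_not_treedepthOnLE hcc hHG (by omega) hS
  omega

/-- If `col` is a `(p+1)`-centered coloring of `G` and `H` is a subgraph of `G`
(on vertex set `S`) of treedepth exactly `i ≤ p`, then the vertices of `H`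
receive at least `i` distinct colors. -/
theorem treedepth_subgraph_many_colors {V C : Type*} [Fintype V]
    [DecidableEq V] [DecidableEq C]
    (G : SimpleGraph V) (col : V → C) (p : ℕ)
    (hcc : IsCenteredColoring G col (p + 1))
    (S : Finset V) (H : SimpleGraph {v : V // v ∈ S})
    (hsub : ∀ a b : {v : V // v ∈ S}, H.Adj a b → G.Adj a b)
    (i : ℕ) (hip : i ≤ p)
    (htd : TreedepthLE H i) (htd' : ¬ TreedepthLE H (i - 1)) :
    i ≤ (S.image col).card :=
  treedepth_subgraph_many_colors_general G col p hcc S H hsub i hip htd'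
end

section
/- Let G be a connected induced subgraph using exactly i ≤ p colors under a (p+1)-centered coloring of a supergraph. Then there exists a vertex v of unique color in G, and recursively removing such vertices yields an elimination forest of G of depth at most i. Formally: a connected graph G with a coloring using at most i colors, such that every connected induced subgraph of G has a uniquely-colored vertex, has treedepth at most i. -/
theorem aux_treedepth {V C : Type*} [Fintype V] [DecidableEq V] [DecidableEq C]
    (G : SimpleGraph V) (col : V → C)
    (huniq : ∀ S : Finset V, (G.induce (↑S : Set V)).Connected →
      ∃ c, (S.filter (fun v => col v = c)).card = 1) :
    ∀ (S : Finset V) (i : ℕ), (S.image col).card ≤ i →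
    ∃ lt : V → V → Prop,
      (∀ a b, lt a b → a ∈ S ∧ b ∈ S) ∧
      (∀ a b c, lt a b → lt b c → lt a c) ∧
      (∀ a, ¬ lt a a) ∧
      (∀ a b c, lt a c → lt b c → a = b ∨ lt a b ∨ lt b a) ∧
      (∀ a ∈ S, ∀ b ∈ S, G.Adj a b → lt a b ∨ lt b a) ∧
      (∀ Cs : Finset V, Cs ⊆ S → (∀ a ∈ Cs, ∀ b ∈ Cs, a = b ∨ lt a b ∨ lt b a) →
        Cs.card ≤ i) := by
  classical
  intro S
  induction S using Finset.strongInductionOn with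
  | _ S ih =>
  intro i hcol
  rcases S.eq_empty_or_nonempty with rfl | hSne
  · refine ⟨fun _ _ => False, by simp, by simp, by simp, by simp, by simp,
      fun Cs hsub _ => ?_⟩
    simp [Finset.subset_empty.mp hsub]
  by_cases hconn : (G.induce (↑S : Set V)).Connected
  · -- connected case: remove the uniquely colored vertex
    obtain ⟨c, hc⟩ := huniq S hconn
    obtain ⟨v, hv⟩ := Finset.card_eq_one.mp hc
    have hvmem := hv ▸ Finset.mem_singleton_self v
    have hvS : v ∈ S := (Finset.mem_filter.mp hvmem).1
    have hvc : col v = c := (Finset.mem_filter.mp hvmem).2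
    have huv : ∀ u ∈ S, col u = c → u = v := fun u hu hcu =>
      Finset.mem_singleton.mp (hv ▸ Finset.mem_filter.mpr ⟨hu, hcu⟩)
    have hsub : S.erase v ⊂ S := Finset.erase_ssubset hvS
    have hcol' : ((S.erase v).image col).card < (S.image col).card := by
      apply Finset.card_lt_card
      constructor
      · exact Finset.image_subset_image (Finset.erase_subset _ _)
      · intro hcontra
        have hcmem : c ∈ (S.erase v).image col :=
          hcontra (Finset.mem_image.mpr ⟨v, hvS, hvc⟩)
        obtain ⟨u, hu, hcu⟩ := Finset.mem_image.mp hcmem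
        exact (Finset.ne_of_mem_erase hu) (huv u (Finset.mem_of_mem_erase hu) hcu)
    obtain ⟨lt', hdom', htr', hir', hlin', hadj', hch'⟩ :=
      ih (S.erase v) hsub (((S.erase v).image col).card) le_rfl
    refine ⟨fun a b => (a = v ∧ b ∈ S.erase v) ∨ lt' a b, ?_, ?_, ?_, ?_, ?_, ?_⟩
    · rintro a b (⟨rfl, hb⟩ | h)
      · exact ⟨hvS, Finset.mem_of_mem_erase hb⟩
      · exact ⟨Finset.mem_of_mem_erase (hdom' a b h).1,
          Finset.mem_of_mem_erase (hdom' a b h).2⟩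
    · rintro a b c (⟨hav, hb⟩ | hab) (⟨hbv, hc⟩ | hbc)
      · exact absurd hbv (Finset.ne_of_mem_erase hb)
      · exact Or.inl ⟨hav, (hdom' b c hbc).2⟩
      · exact absurd hbv (Finset.ne_of_mem_erase (hdom' a b hab).2)
      · exact Or.inr (htr' a b c hab hbc)
    · rintro a (⟨hav, ha⟩ | h)
      · exact Finset.notMem_erase v S (hav ▸ ha)
      · exact hir' a h
    · rintro a b c (⟨hav, hc⟩ | hac) (⟨hbv, hc'⟩ | hbc)
      · exact Or.inl (hav.trans hbv.symm)
      · exact Or.inr (Or.inl (Or.inl ⟨hav, (hdom' b c hbc).1⟩))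
      · exact Or.inr (Or.inr (Or.inl ⟨hbv, (hdom' a c hac).1⟩))
      · rcases hlin' a b c hac hbc with h | h | h
        · exact Or.inl h
        · exact Or.inr (Or.inl (Or.inr h))
        · exact Or.inr (Or.inr (Or.inr h))
    · intro a ha b hb hab
      by_cases hav : a = v
      · subst hav
        exact Or.inl (Or.inl ⟨rfl, Finset.mem_erase.mpr ⟨(hab.ne).symm, hb⟩⟩)
      · by_cases hbv : b = v
        · subst hbv
          exact Or.inr (Or.inl ⟨rfl, Finset.mem_erase.mpr ⟨hab.ne, ha⟩⟩)
        · rcases hadj' a (Finset.mem_erase.mpr ⟨hav, ha⟩) b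
            (Finset.mem_erase.mpr ⟨hbv, hb⟩) hab with h | h
          · exact Or.inl (Or.inr h)
          · exact Or.inr (Or.inr h)
    · intro Cs hCsub hcomp
      by_cases hvCs : v ∈ Cs
      · have hsub2 : Cs.erase v ⊆ S.erase v := fun x hx =>
          Finset.mem_erase.mpr ⟨(Finset.mem_erase.mp hx).1,
            hCsub (Finset.mem_of_mem_erase hx)⟩
        have hcomp2 : ∀ a ∈ Cs.erase v, ∀ b ∈ Cs.erase v, a = b ∨ lt' a b ∨ lt' b a := by
          intro a ha b hb
          rcases hcomp a (Finset.mem_of_mem_erase ha) b (Finset.mem_of_mem_erase hb)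
            with h | (⟨hav, _⟩ | h) | (⟨hbv, _⟩ | h)
          · exact Or.inl h
          · exact absurd hav (Finset.ne_of_mem_erase ha)
          · exact Or.inr (Or.inl h)
          · exact absurd hbv (Finset.ne_of_mem_erase hb)
          · exact Or.inr (Or.inr h)
        have h1 := hch' (Cs.erase v) hsub2 hcomp2
        have h2 := Finset.card_erase_add_one hvCs
        omega
      · have hsub2 : Cs ⊆ S.erase v := fun x hx =>
          Finset.mem_erase.mpr ⟨fun h => hvCs (h ▸ hx), hCsub hx⟩
        have hcomp2 : ∀ a ∈ Cs, ∀ b ∈ Cs, a = b ∨ lt' a b ∨ lt' b a := by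
          intro a ha b hb
          rcases hcomp a ha b hb with h | (⟨hav, _⟩ | h) | (⟨hbv, _⟩ | h)
          · exact Or.inl h
          · exact absurd hav (Finset.ne_of_mem_erase (hsub2 ha))
          · exact Or.inr (Or.inl h)
          · exact absurd hbv (Finset.ne_of_mem_erase (hsub2 hb))
          · exact Or.inr (Or.inr h)
        have h1 := hch' Cs hsub2 hcomp2
        omega
  · -- disconnected case: split off a connected component
    obtain ⟨x, hxS⟩ := hSne
    have hxS' : x ∈ (↑S : Set V) := Finset.mem_coe.mpr hxS
    set T := S.filter (fun y => ∃ h : y ∈ (↑S : Set V),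
      (G.induce (↑S : Set V)).Reachable ⟨x, hxS'⟩ ⟨y, h⟩) with hT
    have hxT : x ∈ T := Finset.mem_filter.mpr ⟨hxS, hxS', SimpleGraph.Reachable.refl _⟩
    have hTsub : T ⊆ S := Finset.filter_subset _ _
    have hnotall : ∃ y ∈ S, y ∉ T := by
      by_contra h
      push_neg at h
      apply hconn
      haveI : Nonempty (↑(↑S : Set V)) := ⟨⟨x, hxS'⟩⟩
      refine SimpleGraph.Connected.mk ?_
      rintro ⟨u, hu⟩ ⟨w, hw⟩
      obtain ⟨_, _, hru⟩ := Finset.mem_filter.mp (h u (Finset.mem_coe.mp hu))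
      obtain ⟨_, _, hrw⟩ := Finset.mem_filter.mp (h w (Finset.mem_coe.mp hw))
      exact hru.symm.trans hrw
    obtain ⟨y0, hy0S, hy0T⟩ := hnotall
    have hTss : T ⊂ S := Finset.ssubset_iff_of_subset hTsub |>.mpr ⟨y0, hy0S, hy0T⟩
    have hDss : S \ T ⊂ S := by
      refine Finset.ssubset_iff_of_subset (Finset.sdiff_subset) |>.mpr ⟨x, hxS, ?_⟩
      simp [Finset.mem_sdiff, hxT]
    have hcross : ∀ y ∈ T, ∀ z ∈ S, G.Adj y z → z ∈ T := by
      intro y hy z hz hadj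
      obtain ⟨hyS, hyS', hr⟩ := Finset.mem_filter.mp hy
      refine Finset.mem_filter.mpr ⟨hz, Finset.mem_coe.mpr hz, hr.trans ?_⟩
      exact SimpleGraph.Adj.reachable (by exact hadj)
    obtain ⟨lt1, hdom1, htr1, hir1, hlin1, hadj1, hch1⟩ :=
      ih T hTss i (le_trans (Finset.card_le_card (Finset.image_subset_image hTsub)) hcol)
    obtain ⟨lt2, hdom2, htr2, hir2, hlin2, hadj2, hch2⟩ :=
      ih (S \ T) hDss i
        (le_trans (Finset.card_le_card (Finset.image_subset_image Finset.sdiff_subset)) hcol)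
    have hdisj : ∀ a, a ∈ T → a ∈ S \ T → False := by
      intro a h1 h2
      exact (Finset.mem_sdiff.mp h2).2 h1
    refine ⟨fun a b => lt1 a b ∨ lt2 a b, ?_, ?_, ?_, ?_, ?_, ?_⟩
    · rintro a b (h | h)
      · exact ⟨hTsub (hdom1 a b h).1, hTsub (hdom1 a b h).2⟩
      · exact ⟨Finset.sdiff_subset (hdom2 a b h).1, Finset.sdiff_subset (hdom2 a b h).2⟩
    · rintro a b c (hab | hab) (hbc | hbc)
      · exact Or.inl (htr1 a b c hab hbc)
      · exact absurd (hdom2 b c hbc).1 (fun h => hdisj b (hdom1 a b hab).2 h)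
      · exact absurd (hdom1 b c hbc).1 (fun h => hdisj b h (hdom2 a b hab).2)
      · exact Or.inr (htr2 a b c hab hbc)
    · rintro a (h | h)
      · exact hir1 a h
      · exact hir2 a h
    · rintro a b c (hac | hac) (hbc | hbc)
      · rcases hlin1 a b c hac hbc with h | h | h
        · exact Or.inl h
        · exact Or.inr (Or.inl (Or.inl h))
        · exact Or.inr (Or.inr (Or.inl h))
      · exact absurd (hdom2 b c hbc).2 (fun h => hdisj c (hdom1 a c hac).2 h)
      · exact absurd (hdom1 b c hbc).2 (fun h => hdisj c h (hdom2 a c hac).2)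
      · rcases hlin2 a b c hac hbc with h | h | h
        · exact Or.inl h
        · exact Or.inr (Or.inl (Or.inr h))
        · exact Or.inr (Or.inr (Or.inr h))
    · intro a ha b hb hab
      by_cases haT : a ∈ T
      · have hbT : b ∈ T := hcross a haT b hb hab
        rcases hadj1 a haT b hbT hab with h | h
        · exact Or.inl (Or.inl h)
        · exact Or.inr (Or.inl h)
      · have hbT : b ∉ T := fun hbT => haT (hcross b hbT a ha hab.symm)
        rcases hadj2 a (Finset.mem_sdiff.mpr ⟨ha, haT⟩) b
          (Finset.mem_sdiff.mpr ⟨hb, hbT⟩) hab with h | h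
        · exact Or.inl (Or.inr h)
        · exact Or.inr (Or.inr h)
    · intro Cs hCsub hcomp
      by_cases hall : ∀ y ∈ Cs, y ∈ T
      · refine hch1 Cs hall ?_
        intro a ha b hb
        rcases hcomp a ha b hb with h | (h | h) | (h | h)
        · exact Or.inl h
        · exact Or.inr (Or.inl h)
        · exact absurd (hdom2 a b h).1 (fun hc => hdisj a (hall a ha) hc)
        · exact Or.inr (Or.inr h)
        · exact absurd (hdom2 b a h).1 (fun hc => hdisj b (hall b hb) hc)
      · push_neg at hall
        obtain ⟨y, hyCs, hyT⟩ := hall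
        have hallD : ∀ z ∈ Cs, z ∈ S \ T := by
          intro z hz
          by_cases hzy : z = y
          · exact Finset.mem_sdiff.mpr ⟨hCsub hz, hzy ▸ hyT⟩
          · rcases hcomp z hz y hyCs with h | (h | h) | (h | h)
            · exact absurd h hzy
            · exact absurd (hdom1 z y h).2 hyT
            · exact Finset.mem_sdiff.mpr ⟨hCsub hz, fun hc => hdisj z hc (hdom2 z y h).1⟩
            · exact absurd (hdom1 y z h).1 hyT
            · exact Finset.mem_sdiff.mpr ⟨hCsub hz, fun hc => hdisj z hc (hdom2 y z h).2⟩
        refine hch2 Cs hallD ?_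
        intro a ha b hb
        rcases hcomp a ha b hb with h | (h | h) | (h | h)
        · exact Or.inl h
        · exact absurd (hdom1 a b h).1 (fun hc => hdisj a hc (hallD a ha))
        · exact Or.inr (Or.inl h)
        · exact absurd (hdom1 b a h).1 (fun hc => hdisj b hc (hallD b hb))
        · exact Or.inr (Or.inr h)

/-- A connected graph colored with at most `i` colors, in which every connected
induced subgraph contains a uniquely-colored vertex, has treedepth at most `i`
(recursively removing uniquely-colored vertices yields an elimination forest of
depth at most `i`). -/
theorem unique_color_removal_treedepth {V C : Type*} [Fintype V]
    [DecidableEq V] [DecidableEq C]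
    (G : SimpleGraph V) (hG : G.Connected) (col : V → C) (i : ℕ)
    (hcols : (Finset.univ.image col).card ≤ i)
    (huniq : ∀ S : Finset V, (G.induce (↑S : Set V)).Connected →
      ∃ c, (S.filter (fun v => col v = c)).card = 1) :
    TreedepthLE G i := by
  obtain ⟨lt, hdom, htr, hir, hlin, hadj, hch⟩ :=
    aux_treedepth G col huniq Finset.univ i hcols
  exact ⟨lt, htr, hir, hlin,
    fun a b hab => hadj a (Finset.mem_univ a) b (Finset.mem_univ b) hab,
    fun Cs hc => hch Cs (Finset.subset_univ Cs) hc⟩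
end

section
/- Let G be a graph and k a positive integer. Suppose G' is the graph whose vertices are pairs v_{B,C} where C ranges over connected components of a pattern graph H and B over induced subgraphs of G isomorphic to C, with colors given by C, and with an edge between v_{B,C} and v_{B',C'} iff B and B' intersect or there is a G-edge between a vertex of B and a vertex of B'. Then G contains an induced subgraph isomorphic to H if and only if G' contains a multicolored independent set of size equal to the number of connected components of H (one vertex of each color, pairwise non-adjacent). -/
section Aux

variable {V W : Type*} (G : SimpleGraph V) (H : SimpleGraph W)

/-- the preimage in `G` of a connected component of `H` under an induced iso. -/
def fwdSet (S : Set V) (φ : G.induce S ≃g H) (c : H.ConnectedComponent) : Set V :=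
  {v | ∃ hv : v ∈ S, H.connectedComponentMk (φ ⟨v, hv⟩) = c}

noncomputable def fwdIso (S : Set V) (φ : G.induce S ≃g H) (c : H.ConnectedComponent) :
    G.induce (fwdSet G H S φ c) ≃g H.induce c.supp where
  toFun x := ⟨φ ⟨x.1, x.2.choose⟩, x.2.choose_spec⟩
  invFun y := ⟨(φ.symm y.1).1, (φ.symm y.1).2, by
    show H.connectedComponentMk (φ (φ.symm y.1)) = c
    rw [φ.apply_symm_apply]
    exact (SimpleGraph.ConnectedComponent.mem_supp_iff _ _).mp y.2⟩
  left_inv x := by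
    apply Subtype.ext
    show (φ.symm (φ ⟨x.1, _⟩)).1 = x.1
    rw [φ.symm_apply_apply]
  right_inv y := by
    apply Subtype.ext
    show (φ (φ.symm y.1)) = y.1
    rw [φ.apply_symm_apply]
  map_rel_iff' := φ.map_rel_iff

end Aux

/-- Correctness of the reduction from Induced Subgraph Isomorphism to
Multicolored Independent Set: the vertices of the reduction graph `G'` are pairs
`(C, B)` where `C` is a connected component of the pattern `H` and `B` an induced
subgraph of `G` isomorphic to `H[C]`, colored by `C`, with `(C,B)` adjacent to
`(C',B')` iff `B` and `B'` intersect or are joined by a `G`-edge.  Then `G`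
contains an induced subgraph isomorphic to `H` iff `G'` has a multicolored
independent set with one vertex of each color (component of `H`). -/
theorem induced_subgraph_iso_reduction {V W : Type*} [Fintype V] [Fintype W]
    (G : SimpleGraph V) (H : SimpleGraph W)
    (G' : SimpleGraph (Σ c : H.ConnectedComponent,
      {B : Set V // Nonempty (G.induce B ≃g H.induce c.supp)}))
    (hG' : G' = SimpleGraph.fromRel (fun x y =>
      (x.2.1 ∩ y.2.1).Nonempty ∨ ∃ a ∈ x.2.1, ∃ b ∈ y.2.1, G.Adj a b)) :
    (∃ S : Set V, Nonempty (G.induce S ≃g H)) ↔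
    (∃ f : H.ConnectedComponent → (Σ c : H.ConnectedComponent,
        {B : Set V // Nonempty (G.induce B ≃g H.induce c.supp)}),
      (∀ c, (f c).1 = c) ∧ ∀ c c', c ≠ c' → ¬ G'.Adj (f c) (f c')) := by
  subst hG'
  constructor
  · rintro ⟨S, ⟨φ⟩⟩
    refine ⟨fun c => ⟨c, fwdSet G H S φ c, ⟨fwdIso G H S φ c⟩⟩, fun c => rfl, ?_⟩
    intro c c' hcc'
    rw [SimpleGraph.fromRel_adj]
    rintro ⟨-, h | h⟩
    · apply hcc'
      rcases h with ⟨v, ⟨hv, h1⟩, ⟨hv', h2⟩⟩ | ⟨a, ⟨ha, h1⟩, b, ⟨hb, h2⟩, hab⟩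
      · exact h1.symm.trans h2
      · have : H.Adj (φ ⟨a, ha⟩) (φ ⟨b, hb⟩) := φ.map_rel_iff.mpr hab
        rw [← h1, ← h2]
        exact SimpleGraph.ConnectedComponent.sound this.reachable
    · apply hcc'
      rcases h with ⟨v, ⟨hv, h1⟩, ⟨hv', h2⟩⟩ | ⟨a, ⟨ha, h1⟩, b, ⟨hb, h2⟩, hab⟩
      · exact h2.symm.trans h1
      · have : H.Adj (φ ⟨a, ha⟩) (φ ⟨b, hb⟩) := φ.map_rel_iff.mpr hab
        rw [← h1, ← h2]
        exact (SimpleGraph.ConnectedComponent.sound this.reachable).symm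
  · rintro ⟨f, hf1, hf2⟩
    classical
    set B : H.ConnectedComponent → Set V := fun c => (f c).2.1 with hB
    have hψ : ∀ c, Nonempty (G.induce (B c) ≃g H.induce c.supp) := by
      intro c
      show Nonempty (G.induce ((f c).2.1) ≃g H.induce c.supp)
      rcases hfc : f c with ⟨c', Bc, hBc⟩
      have hc : c' = c := by rw [← hf1 c, hfc]
      subst hc
      exact hBc
    let ψ : ∀ c, G.induce (B c) ≃g H.induce c.supp := fun c => (hψ c).some
    -- derive disjointness and non-adjacency from hf2
    have hne : ∀ c c', c ≠ c' → f c ≠ f c' := by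
      intro c c' h hcontra
      exact h (((hf1 c).symm.trans (congrArg Sigma.fst hcontra)).trans (hf1 c'))
    have key : ∀ c c', c ≠ c' →
        ¬ ((B c ∩ B c').Nonempty ∨ ∃ a ∈ B c, ∃ b ∈ B c', G.Adj a b) := by
      intro c c' h
      have := hf2 c c' h
      rw [SimpleGraph.fromRel_adj] at this
      intro hrel
      exact this ⟨hne c c' h, Or.inl hrel⟩
    have hdisj : ∀ c c', c ≠ c' → ∀ v, v ∈ B c → v ∈ B c' → False := by
      intro c c' h v hv hv'
      exact key c c' h (Or.inl ⟨v, hv, hv'⟩)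
    have hedge : ∀ c c', c ≠ c' → ∀ a ∈ B c, ∀ b ∈ B c', ¬ G.Adj a b := by
      intro c c' h a ha b hb hab
      exact key c c' h (Or.inr ⟨a, ha, b, hb, hab⟩)
    refine ⟨⋃ c, B c, ⟨?_⟩⟩
    -- build an iso H ≃g G.induce S and take symm
    let toS : (Σ c, (B c : Set V)) → (⋃ c, B c : Set V) :=
      fun x => ⟨x.2.1, Set.mem_iUnion.2 ⟨x.1, x.2.2⟩⟩
    have hbij : Function.Bijective toS := by
      constructor
      · rintro ⟨c, v, hv⟩ ⟨c', v', hv'⟩ hvv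
        have hval : v = v' := congrArg Subtype.val hvv
        subst hval
        have hcc : c = c' := by
          by_contra h
          exact hdisj c c' h v hv hv'
        subst hcc
        rfl
      · rintro ⟨v, hv⟩
        obtain ⟨c, hc⟩ := Set.mem_iUnion.mp hv
        exact ⟨⟨c, v, hc⟩, rfl⟩
    let eSig : (Σ c, (B c : Set V)) ≃ (⋃ c, B c : Set V) := Equiv.ofBijective toS hbij
    let eW : W ≃ Σ c : H.ConnectedComponent, (c.supp : Set W) :=
      { toFun := fun w => ⟨H.connectedComponentMk w, w, rfl⟩
        invFun := fun x => x.2.1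
        left_inv := fun w => rfl
        right_inv := by
          rintro ⟨c, w, hw⟩
          have h : H.connectedComponentMk w = c :=
            (SimpleGraph.ConnectedComponent.mem_supp_iff _ _).mp hw
          subst h
          rfl }
    let e2 : (Σ c : H.ConnectedComponent, (c.supp : Set W)) ≃ (Σ c, (B c : Set V)) :=
      Equiv.sigmaCongrRight fun c => (ψ c).toEquiv.symm
    let e' : W ≃ (⋃ c, B c : Set V) := (eW.trans e2).trans eSig
    have hΦ : ∀ (w : W) (c) (h : H.connectedComponentMk w = c),
        ((e' w : V)) = ((ψ c).symm ⟨w, h⟩ : V) := by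
      intro w c h
      subst h
      rfl
    have hΦmem : ∀ (w : W), (e' w : V) ∈ B (H.connectedComponentMk w) := by
      intro w
      rw [hΦ w _ rfl]
      exact ((ψ (H.connectedComponentMk w)).symm ⟨w, rfl⟩).2
    refine SimpleGraph.Iso.symm (RelIso.mk e' ?_)
    intro w w'
    show G.Adj (e' w : V) (e' w' : V) ↔ H.Adj w w'
    constructor
    · intro hadj
      by_cases h : H.connectedComponentMk w = H.connectedComponentMk w'
      · rw [hΦ w _ rfl, hΦ w' (H.connectedComponentMk w) h.symm] at hadj
        have := (ψ (H.connectedComponentMk w)).symm.map_rel_iff.mp hadj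
        exact this
      · exact absurd hadj (hedge _ _ h _ (hΦmem w) _ (hΦmem w'))
    · intro hadj
      have h : H.connectedComponentMk w' = H.connectedComponentMk w :=
        (SimpleGraph.ConnectedComponent.sound hadj.reachable).symm
      rw [hΦ w _ rfl, hΦ w' (H.connectedComponentMk w) h]
      exact (ψ (H.connectedComponentMk w)).symm.map_rel_iff.mpr hadj
end

section
/- Blow-up correctness for disjunction of multicolored independent set instances: Let G₁ be a graph colored with colors c_1,...,c_p and G₂ a graph colored with d_1,...,d_q. Form G' as follows: replace each vertex u of G₁ of color c_i by q vertices with distinct colors e_{i,1},...,e_{i,q}, replace each vertex v of G₂ of color d_j by p vertices with colors e_{1,j},...,e_{p,j}, and for every edge of G₁ or G₂ put a complete bipartite graph between the corresponding blow-up sets. Then G' has a multicolored independent set of size p·q (one vertex of each color e_{i,j}) if and only if G₁ has a multicolored independent set of size p or G₂ has a multicolored independent set of size q. -/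
/-!
The blown-up graph is the disjoint sum of `G₁` and `G₂`, each pulled back along the projection
forgetting the copy index. If `G₁` has a multicolored independent set `g`, the copies `(g i, j)`
form one for `G'`, and symmetrically for `G₂`. Conversely, given a multicolored independent set
`f` of `G'`, either some row `{i₀} × Fin q` of colors is served entirely by copies of `G₂`-vertices,
whose originals then form a multicolored independent set of `G₂`; or every row `i` contains a
color `(i, j i)` served by a copy of a `G₁`-vertex, and these originals form one of `G₁`.
-/

namespace SimpleGraph

variable {V V₁ V₂ κ α β : Type*}

def IsMulticoloredIndep (G : SimpleGraph V) (c : V → κ) (f : κ → V) : Prop :=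
  (∀ k, c (f k) = k) ∧ ∀ k k', k ≠ k' → ¬ G.Adj (f k) (f k')

theorem IsMulticoloredIndep.not_adj {G : SimpleGraph V} {c : V → κ} {f : κ → V}
    (hf : G.IsMulticoloredIndep c f) (k k' : κ) : ¬ G.Adj (f k) (f k') := by
  rcases eq_or_ne k k' with rfl | hk
  · exact G.loopless.irrefl _
  · exact hf.2 k k' hk

theorem fromRel_blowup_eq_sum_comap (G₁ : SimpleGraph V₁) (G₂ : SimpleGraph V₂) :
    SimpleGraph.fromRel (fun x y : (V₁ × β) ⊕ (V₂ × α) =>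
      (∃ u u' : V₁, ∃ j j' : β, x = .inl (u, j) ∧ y = .inl (u', j') ∧ G₁.Adj u u') ∨
      (∃ v v' : V₂, ∃ i i' : α, x = .inr (v, i) ∧ y = .inr (v', i') ∧ G₂.Adj v v')) =
      G₁.comap Prod.fst ⊕g G₂.comap Prod.fst := by
  ext (⟨u, j⟩ | ⟨v, i⟩) (⟨u', j'⟩ | ⟨v', i'⟩)
  · simpa [G₁.adj_comm u'] using fun h hu => absurd hu h.ne
  · simp
  · simp
  · simpa [G₂.adj_comm v'] using fun h hv => absurd hv h.ne

def blowupColoring (col₁ : V₁ → α) (col₂ : V₂ → β) : (V₁ × β) ⊕ (V₂ × α) → α × β :=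
  Sum.elim (fun uj => (col₁ uj.1, uj.2)) (fun vi => (vi.2, col₂ vi.1))

variable {G₁ : SimpleGraph V₁} {G₂ : SimpleGraph V₂} {col₁ : V₁ → α} {col₂ : V₂ → β}

theorem IsMulticoloredIndep.blowup_inl {g : α → V₁} (hg : G₁.IsMulticoloredIndep col₁ g) :
    (G₁.comap Prod.fst ⊕g G₂.comap Prod.fst).IsMulticoloredIndep (blowupColoring col₁ col₂)
      (fun ij => .inl (g ij.1, ij.2)) :=
  ⟨fun ij => by simp [blowupColoring, hg.1], fun ij ij' _ => by simpa using hg.not_adj ij.1 ij'.1⟩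

theorem IsMulticoloredIndep.blowup_inr {h : β → V₂} (hh : G₂.IsMulticoloredIndep col₂ h) :
    (G₁.comap Prod.fst ⊕g G₂.comap Prod.fst).IsMulticoloredIndep (blowupColoring col₁ col₂)
      (fun ij => .inr (h ij.2, ij.1)) :=
  ⟨fun ij => by simp [blowupColoring, hh.1], fun ij ij' _ => by simpa using hh.not_adj ij.2 ij'.2⟩

theorem IsMulticoloredIndep.of_blowup_row_inr
    {f : α × β → (V₁ × β) ⊕ (V₂ × α)}
    (hf : (G₁.comap Prod.fst ⊕g G₂.comap Prod.fst).IsMulticoloredIndep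
      (blowupColoring col₁ col₂) f)
    {i : α} {w : β → V₂ × α} (hw : ∀ j, f (i, j) = .inr (w j)) :
    G₂.IsMulticoloredIndep col₂ (fun j => (w j).1) := by
  have hcol (j : β) : ((w j).2, col₂ (w j).1) = (i, j) := by
    simpa [blowupColoring, hw] using hf.1 (i, j)
  refine ⟨fun j => congrArg Prod.snd (hcol j), fun j j' hj => ?_⟩
  simpa [hw] using hf.2 (i, j) (i, j') (by simpa using hj)

theorem IsMulticoloredIndep.of_blowup_transversal_inl
    {f : α × β → (V₁ × β) ⊕ (V₂ × α)}
    (hf : (G₁.comap Prod.fst ⊕g G₂.comap Prod.fst).IsMulticoloredIndep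
      (blowupColoring col₁ col₂) f)
    {j : α → β} {w : α → V₁ × β} (hw : ∀ i, f (i, j i) = .inl (w i)) :
    G₁.IsMulticoloredIndep col₁ (fun i => (w i).1) := by
  have hcol (i : α) : (col₁ (w i).1, (w i).2) = (i, j i) := by
    simpa [blowupColoring, hw] using hf.1 (i, j i)
  refine ⟨fun i => congrArg Prod.fst (hcol i), fun i i' _ => ?_⟩
  simpa [hw] using hf.not_adj (i, j i) (i', j i')

end SimpleGraph

theorem Sum.forall_exists_inl_or_exists_forall_inr {α β A B : Type*} (f : α → β → A ⊕ B) :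
    (∀ a, ∃ b x, f a b = .inl x) ∨ ∃ a, ∀ b, ∃ y, f a b = .inr y := by
  refine or_iff_not_imp_right.2 fun h a => ?_
  obtain ⟨b, hb⟩ := not_forall.1 (not_exists.1 h a)
  cases hab : f a b with
  | inl x => exact ⟨b, x, hab⟩
  | inr y => exact absurd ⟨y, hab⟩ hb

theorem blowup_disjunction_correct_general {V₁ V₂ : Type*}
    (p q : ℕ) (G₁ : SimpleGraph V₁) (G₂ : SimpleGraph V₂)
    (col₁ : V₁ → Fin p) (col₂ : V₂ → Fin q)
    (G' : SimpleGraph ((V₁ × Fin q) ⊕ (V₂ × Fin p)))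
    (hG' : G' = SimpleGraph.fromRel (fun x y =>
      (∃ u u' : V₁, ∃ j j' : Fin q,
        x = Sum.inl (u, j) ∧ y = Sum.inl (u', j') ∧ G₁.Adj u u') ∨
      (∃ v v' : V₂, ∃ i i' : Fin p,
        x = Sum.inr (v, i) ∧ y = Sum.inr (v', i') ∧ G₂.Adj v v')))
    (color : (V₁ × Fin q) ⊕ (V₂ × Fin p) → Fin p × Fin q)
    (hcolor : ∀ x, color x = Sum.elim (fun uj => (col₁ uj.1, uj.2))
      (fun vi => (vi.2, col₂ vi.1)) x) :
    (∃ f : Fin p × Fin q → (V₁ × Fin q) ⊕ (V₂ × Fin p),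
      (∀ ij, color (f ij) = ij) ∧
      ∀ ij ij', ij ≠ ij' → ¬ G'.Adj (f ij) (f ij')) ↔
    ((∃ g : Fin p → V₁, (∀ i, col₁ (g i) = i) ∧
        ∀ i i', i ≠ i' → ¬ G₁.Adj (g i) (g i')) ∨
     (∃ h : Fin q → V₂, (∀ j, col₂ (h j) = j) ∧
        ∀ j j', j ≠ j' → ¬ G₂.Adj (h j) (h j'))) := by
  subst hG'
  obtain rfl : color = SimpleGraph.blowupColoring col₁ col₂ := funext hcolor
  rw [SimpleGraph.fromRel_blowup_eq_sum_comap]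
  show (∃ f, SimpleGraph.IsMulticoloredIndep _ _ f) ↔
    (∃ g, G₁.IsMulticoloredIndep col₁ g) ∨ ∃ h, G₂.IsMulticoloredIndep col₂ h
  constructor
  · rintro ⟨f, hf⟩
    rcases Sum.forall_exists_inl_or_exists_forall_inr (fun i j => f (i, j)) with hrows | ⟨i, hrow⟩
    · choose j w hw using hrows
      exact .inl ⟨_, hf.of_blowup_transversal_inl hw⟩
    · choose w hw using hrow
      exact .inr ⟨_, hf.of_blowup_row_inr hw⟩
  · rintro (⟨g, hg⟩ | ⟨h, hh⟩)
    · exact ⟨_, hg.blowup_inl⟩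
    · exact ⟨_, hh.blowup_inr⟩

/-- Blow-up correctness for the disjunction of two Multicolored Independent Set
instances.  `G₁` is colored by `Fin p`, `G₂` by `Fin q`.  In the blown-up graph
`G'`, each vertex `u` of `G₁` of color `i` is replaced by `q` copies with colors
`(i, 1), ..., (i, q)`, each vertex `v` of `G₂` of color `j` by `p` copies with
colors `(1, j), ..., (p, j)`, and every edge of `G₁` or `G₂` becomes a complete
bipartite graph between the blow-up sets.  Then `G'` has a multicolored
independent set with one vertex of each of the `p·q` colors iff `G₁` has a
multicolored independent set of size `p` or `G₂` has one of size `q`. -/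
theorem blowup_disjunction_correct {V₁ V₂ : Type*} [Fintype V₁] [Fintype V₂]
    (p q : ℕ) (G₁ : SimpleGraph V₁) (G₂ : SimpleGraph V₂)
    (col₁ : V₁ → Fin p) (col₂ : V₂ → Fin q)
    (G' : SimpleGraph ((V₁ × Fin q) ⊕ (V₂ × Fin p)))
    (hG' : G' = SimpleGraph.fromRel (fun x y =>
      (∃ u u' : V₁, ∃ j j' : Fin q,
        x = Sum.inl (u, j) ∧ y = Sum.inl (u', j') ∧ G₁.Adj u u') ∨
      (∃ v v' : V₂, ∃ i i' : Fin p,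
        x = Sum.inr (v, i) ∧ y = Sum.inr (v', i') ∧ G₂.Adj v v')))
    (color : (V₁ × Fin q) ⊕ (V₂ × Fin p) → Fin p × Fin q)
    (hcolor : ∀ x, color x = Sum.elim (fun uj => (col₁ uj.1, uj.2))
      (fun vi => (vi.2, col₂ vi.1)) x) :
    (∃ f : Fin p × Fin q → (V₁ × Fin q) ⊕ (V₂ × Fin p),
      (∀ ij, color (f ij) = ij) ∧
      ∀ ij ij', ij ≠ ij' → ¬ G'.Adj (f ij) (f ij')) ↔
    ((∃ g : Fin p → V₁, (∀ i, col₁ (g i) = i) ∧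
        ∀ i i', i ≠ i' → ¬ G₁.Adj (g i) (g i')) ∨
     (∃ h : Fin q → V₂, (∀ j, col₂ (h j) = j) ∧
        ∀ j j', j ≠ j' → ¬ G₂.Adj (h j) (h j'))) :=
  blowup_disjunction_correct_general p q G₁ G₂ col₁ col₂ G' hG' color hcolor
end

section
/- In the circuit construction for Multicolored Independent Set, the constructed circuit of weft 1 and depth 3 is correct: given a vertex-colored graph G, the Boolean circuit with an input gate for each vertex, a negation gate for each input, an OR gate (¬u ∨ ¬v) for each edge {u,v} and each monochromatic pair (u,v), and a single large AND of all OR gates, accepts an input vector of weight k if and only if G contains a multicolored independent set corresponding to the k vertices set to 1. In particular, the circuit accepts a weight-k vector x if and only if the set {v : x_v = 1} has size k, is independent in G, and contains no two vertices of the same color. -/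
/-- Correctness of the weft-1, depth-3 circuit for Multicolored Independent Set:
the circuit, which is the conjunction over all edges `{u,v}` and all distinct
same-colored pairs `(u,v)` of the clause `(¬x_u ∨ ¬x_v)`, accepts a Boolean
vector `x` of weight `k` iff the set of vertices set to `1` has size `k`, is an
independent set, and has pairwise distinct colors. -/
theorem mis_circuit_correct {V C : Type*} [Fintype V] [DecidableEq V]
    (G : SimpleGraph V) (col : V → C) (x : V → Bool) (k : ℕ)
    (hw : (Finset.univ.filter (fun v => x v = true)).card = k) :
    ((∀ u v : V, G.Adj u v → (¬ x u = true ∨ ¬ x v = true)) ∧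
     (∀ u v : V, u ≠ v → col u = col v → (¬ x u = true ∨ ¬ x v = true))) ↔
    ((Finset.univ.filter (fun v => x v = true)).card = k ∧
     (∀ a ∈ Finset.univ.filter (fun v => x v = true),
        ∀ b ∈ Finset.univ.filter (fun v => x v = true), ¬ G.Adj a b) ∧
     (∀ a ∈ Finset.univ.filter (fun v => x v = true),
        ∀ b ∈ Finset.univ.filter (fun v => x v = true),
          a ≠ b → col a ≠ col b)) := by
  constructor
  · rintro ⟨h1, h2⟩
    refine ⟨hw, ?_, ?_⟩
    · intro a ha b hb hab
      simp only [Finset.mem_filter] at ha hb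
      rcases h1 a b hab with h | h <;> [exact h ha.2; exact h hb.2]
    · intro a ha b hb hne hcol
      simp only [Finset.mem_filter] at ha hb
      rcases h2 a b hne hcol with h | h <;> [exact h ha.2; exact h hb.2]
  · rintro ⟨-, h1, h2⟩
    constructor
    · intro u v hadj
      by_contra h
      push_neg at h
      exact h1 u (by simp [h.1]) v (by simp [h.2]) hadj
    · intro u v hne hcol
      by_contra h
      push_neg at h
      exact h2 u (by simp [h.1]) v (by simp [h.2]) hne hcol
end
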